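/- If ker(h⁻) = 0, where h⁻ = h_l − h_r : B → H, then the group homomorphism b ↦ j_L(b)⁻¹ ∘ b* from B into the K-linear automorphisms of the formal function space Af(H,α) is injective. -/
import Mathlib


noncomputable def lmulE {K : Type*} [Field K] {H : Type*} [AddCommGroup H]
    (α : H → H → Kˣ) (h : H) (Φ : H → K) : H → K :=
  fun g => (α h (g - h) : K) * Φ (g - h)

noncomputable def rmulEinv {K : Type*} [Field K] {H : Type*} [AddCommGroup H]
    (α : H → H → Kˣ) (h : H) (Φ : H → K) : H → K :=
  fun g => (α h h : K) * (α (g + h) (-h) : K) * Φ (g + h)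

noncomputable def jfac {K : Type*} [Field K] {H : Type*} [AddCommGroup H]
    (α : H → H → Kˣ) (hl hr : H) (c : K) (Φ : H → K) : H → K :=
  fun g => c * lmulE α hl (rmulEinv α hr Φ) g

noncomputable def bstarF {K : Type*} [Field K] {H : Type*}
    (χb : H → Kˣ) (Φ : H → K) : H → K :=
  fun h => (χb h : K) * Φ h

/-- The map `Φ ↦ j_L(b)⁻¹(b*(Φ))`. -/
noncomputable def thetaAct {K : Type*} [Field K] {H : Type*} [AddCommGroup H]
    (α : H → H → Kˣ) (χb : H → Kˣ) (hlb hrb : H) (c : K) (Φ : H → K) : H → K :=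
  Function.invFun (jfac α hlb hrb c) (bstarF χb Φ)

section Aux

variable {K : Type*} [Field K] {H : Type*} [AddCommGroup H]

lemma jfac_apply (α : H → H → Kˣ) (hl hr : H) (c : K) (Φ : H → K) (g : H) :
    jfac α hl hr c Φ g =
      (c * (α hl (g - hl) : K) * (α hr hr : K) * (α (g - hl + hr) (-hr) : K)) *
        Φ (g - hl + hr) := by
  simp only [jfac, lmulE, rmulEinv]; ring

noncomputable def jinv (α : H → H → Kˣ) (hl hr : H) (c : K) (Ψ : H → K) : H → K :=
  fun h =>
    (c * (α hl (h - hr) : K) * (α hr hr : K) * (α h (-hr) : K))⁻¹ * Ψ (h + hl - hr)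

lemma jfac_jinv (α : H → H → Kˣ) (hl hr : H) (c : K) (hc : c ≠ 0) (Ψ : H → K) :
    jfac α hl hr c (jinv α hl hr c Ψ) = Ψ := by
  funext g
  rw [jfac_apply]
  simp only [jinv]
  have h1 : g - hl + hr - hr = g - hl := by abel
  have h2 : g - hl + hr + hl - hr = g := by abel
  rw [h1, h2]
  have hne : (c * (α hl (g - hl) : K) * (α hr hr : K) * (α (g - hl + hr) (-hr) : K)) ≠ 0 :=
    mul_ne_zero (mul_ne_zero (mul_ne_zero hc (α hl (g - hl)).ne_zero)
      (α hr hr).ne_zero) (α (g - hl + hr) (-hr)).ne_zero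
  rw [← mul_assoc, mul_inv_cancel₀ hne, one_mul]

lemma jfac_injective (α : H → H → Kˣ) (hl hr : H) (c : K) (hc : c ≠ 0) :
    Function.Injective (jfac α hl hr c) := by
  intro Φ₁ Φ₂ h
  funext x
  have hx := congrFun h (x + hl - hr)
  rw [jfac_apply, jfac_apply] at hx
  have h2 : x + hl - hr - hl + hr = x := by abel
  rw [h2] at hx
  have hne : (c * (α hl (x + hl - hr - hl) : K) * (α hr hr : K) *
      (α (x + hl - hr - hl + hr) (-hr) : K)) ≠ 0 :=
    mul_ne_zero (mul_ne_zero (mul_ne_zero hc (Units.ne_zero _))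
      (Units.ne_zero _)) (Units.ne_zero _)
  rw [h2] at hne
  exact mul_left_cancel₀ hne hx

lemma thetaAct_eq (α : H → H → Kˣ) (χb : H → Kˣ) (hl hr : H) (c : K) (hc : c ≠ 0)
    (Φ : H → K) :
    thetaAct α χb hl hr c Φ = jinv α hl hr c (bstarF χb Φ) := by
  rw [thetaAct, ← jfac_jinv α hl hr c hc (bstarF χb Φ),
    Function.leftInverse_invFun (jfac_injective α hl hr c hc),
    jfac_jinv α hl hr c hc]

end Aux

/-- if `ker(h⁻) = 0` where `h⁻ = h_l − h_r : B → H`, then the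
group homomorphism `b ↦ j_L(b)⁻¹ ∘ b*` from `B` into the K-linear
automorphisms of `Af(H,α)` is injective. -/
theorem stmt13 {K : Type*} [Field K] {H : Type*} [AddCommGroup H]
    [Module.Free ℤ H] [Module.Finite ℤ H]
    {B : Type*} [AddCommGroup B]
    (α : H → H → Kˣ)
    (halt : ∀ h g, α h g * α g h = 1)
    (hbil₁ : ∀ h₁ h₂ g, α (h₁ + h₂) g = α h₁ g * α h₂ g)
    (hbil₂ : ∀ h g₁ g₂, α h (g₁ + g₂) = α h g₁ * α h g₂)
    (χ : B → H → Kˣ)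
    (hχB : ∀ b b' h, χ (b + b') h = χ b h * χ b' h)
    (hχH : ∀ b h h', χ b (h + h') = χ b h * χ b h')
    (hl hr : B →+ H)
    (ψ : B → Kˣ) (hψ : ∀ b b', ψ (b + b') = ψ b * ψ b')
    (pair : B → B → Kˣ)
    (hpsym : ∀ b₁ b₂, pair b₁ b₂ = pair b₂ b₁)
    (hpbil : ∀ b₁ b₂ b, pair (b₁ + b₂) b = pair b₁ b * pair b₂ b)
    (hcond : ∀ b₁ b₂ : B,
      χ b₁ (hl b₂ - hr b₂) =
        (pair b₁ b₂) ^ 2 * α (hl b₁) (hl b₂) * (α (hr b₁) (hr b₂))⁻¹)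
    -- `ker h⁻ = 0`
    (hker : ∀ b : B, hl b - hr b = 0 → b = 0) :
    Function.Injective
      (fun b : B =>
        thetaAct α (χ b) (hl b) (hr b) ((ψ b : K) * (pair b b : K))) := by
  intro b₁ b₂ heq
  have hc : ∀ b : B, ((ψ b : K) * (pair b b : K)) ≠ 0 := fun b =>
    mul_ne_zero (ψ b).ne_zero (pair b b).ne_zero
  classical
  set Φ : H → K := fun g => if g = 0 then 1 else 0 with hΦ
  simp only at heq
  have heq' :
      jinv α (hl b₁) (hr b₁) ((ψ b₁ : K) * (pair b₁ b₁ : K)) (bstarF (χ b₁) Φ) =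
      jinv α (hl b₂) (hr b₂) ((ψ b₂ : K) * (pair b₂ b₂ : K)) (bstarF (χ b₂) Φ) := by
    rw [← thetaAct_eq α (χ b₁) (hl b₁) (hr b₁) _ (hc b₁) Φ,
      ← thetaAct_eq α (χ b₂) (hl b₂) (hr b₂) _ (hc b₂) Φ]
    exact congrFun heq Φ
  have hpt := congrFun heq' (hr b₁ - hl b₁)
  simp only [jinv, bstarF] at hpt
  have e1 : hr b₁ - hl b₁ + hl b₁ - hr b₁ = 0 := by abel
  rw [e1] at hpt
  set x : H := hr b₁ - hl b₁ + hl b₂ - hr b₂ with hx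
  by_cases hx0 : x = 0
  · have : hl (b₁ - b₂) - hr (b₁ - b₂) = 0 := by
      rw [map_sub, map_sub]
      have : hl b₁ - hl b₂ - (hr b₁ - hr b₂) = -(hr b₁ - hl b₁ + hl b₂ - hr b₂) := by abel
      rw [this, ← hx, hx0, neg_zero]
    have := hker _ this
    exact sub_eq_zero.mp this
  · exfalso
    rw [hΦ] at hpt
    simp only [if_neg hx0, if_true, mul_zero, mul_one, eq_self_iff_true] at hpt
    have hL : ((((ψ b₁ : K) * (pair b₁ b₁ : K)) * (α (hl b₁) (hr b₁ - hl b₁ - hr b₁) : K) *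
        (α (hr b₁) (hr b₁) : K) * (α (hr b₁ - hl b₁) (-(hr b₁)) : K))⁻¹ *
        (χ b₁ 0 : K)) ≠ 0 := by
      apply mul_ne_zero
      · apply inv_ne_zero
        exact mul_ne_zero (mul_ne_zero (mul_ne_zero (hc b₁) (Units.ne_zero _))
          (Units.ne_zero _)) (Units.ne_zero _)
      · exact (χ b₁ 0).ne_zero
    exact hL hpt
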